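/- Let d ≥ 2, let u : ℝ^d → ℝ be twice continuously differentiable and φ : ℝ^d → ℝ continuously differentiable near a point x ∈ ℝ^d, and suppose Δu(x) = Σ_{i=1}^d ∂²u/∂x_i²(x) = 0. Let v = φ∇u. Then at the point x: (div v)² − Σ_{i,j=1}^d (∂v_i/∂x_j)(∂v_j/∂x_i) ≤ |∇u(x)|² |∇φ(x)|². -/

import Mathlib

open MeasureTheory Real
open scoped RealInnerProductSpace

/-- The partial derivative `∂f/∂x_i` of a scalar function on `ℝ^d`. -/
noncomputable def pderiv' (d : ℕ) (f : EuclideanSpace ℝ (Fin d) → ℝ) (i : Fin d)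
    (x : EuclideanSpace ℝ (Fin d)) : ℝ :=
  fderiv ℝ f x (EuclideanSpace.single i 1)

/-!
Write `A = ∇²u(x)`, `U = ∇u(x)`, `P = ∇φ(x)`. The Jacobian of `v = φ ∇u` at `x` is
`B = φ(x) A + U Pᵀ`, with `A` symmetric and traceless. Hence `tr B = U·P`, and since the
antisymmetric part of `B` is that of `U Pᵀ`, Lagrange's identity gives
`(tr B)² - tr(B²) = |U|²|P|² - ‖B‖²_F ≤ |U|²|P|²`.
-/

open Finset

theorem sum_sum_mul_eq_zero_of_symm_of_antisymm {ι : Type*} [Fintype ι] {A W : ι → ι → ℝ}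
    (hA : ∀ i j, A i j = A j i) (hW : ∀ i j, W i j = -W j i) :
    ∑ i, ∑ j, A i j * W i j = 0 := by
  have h : ∑ i, ∑ j, A i j * W i j = -∑ i, ∑ j, A i j * W i j :=
    calc ∑ i, ∑ j, A i j * W i j = ∑ i, ∑ j, A j i * W j i := sum_comm
      _ = -∑ i, ∑ j, A i j * W i j := by
        simp only [← sum_neg_distrib, ← mul_neg]
        exact sum_congr rfl fun i _ => sum_congr rfl fun j _ => by rw [hA j i, hW j i]
  linarith

theorem sq_sum_diag_sub_sum_mul_swap_of_symm_of_trace_eq_zero {ι : Type*} [Fintype ι]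
    {A : ι → ι → ℝ} (hA : ∀ i j, A i j = A j i) (htr : ∑ i, A i i = 0) (c : ℝ) (U P : ι → ℝ) :
    (∑ i, (c * A i i + U i * P i)) ^ 2
      - ∑ i, ∑ j, (c * A i j + U i * P j) * (c * A j i + U j * P i)
      = (∑ i, U i ^ 2) * (∑ i, P i ^ 2) - ∑ i, ∑ j, (c * A i j + U i * P j) ^ 2 := by
  have hcross := sum_sum_mul_eq_zero_of_symm_of_antisymm hA
    (W := fun i j => U i * P j - U j * P i) (fun i j => by ring)
  rw [sum_add_distrib, ← mul_sum, htr, mul_zero, zero_add, sq, sum_mul_sum, sum_mul_sum,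
    ← sub_eq_zero]
  simp only [← sum_sub_distrib]
  rw [← mul_zero c, ← hcross, mul_sum]
  refine sum_congr rfl fun i _ => ?_
  rw [mul_sum]
  refine sum_congr rfl fun j _ => ?_
  rw [hA j i]
  ring

section PartialDerivatives

variable {d : ℕ} {f g : EuclideanSpace ℝ (Fin d) → ℝ} {x : EuclideanSpace ℝ (Fin d)}

theorem gradient_apply_eq_pderiv' (f : EuclideanSpace ℝ (Fin d) → ℝ)
    (x : EuclideanSpace ℝ (Fin d)) (i : Fin d) : gradient f x i = pderiv' d f i x := by
  have h : ⟪gradient f x, EuclideanSpace.single i (1 : ℝ)⟫ = pderiv' d f i x :=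
    InnerProductSpace.toDual_symm_apply
  rwa [EuclideanSpace.inner_single_right, conj_trivial, one_mul] at h

theorem norm_gradient_sq_eq_sum_pderiv'_sq (f : EuclideanSpace ℝ (Fin d) → ℝ)
    (x : EuclideanSpace ℝ (Fin d)) : ‖gradient f x‖ ^ 2 = ∑ i, pderiv' d f i x ^ 2 := by
  simp only [EuclideanSpace.real_norm_sq_eq, gradient_apply_eq_pderiv']

theorem pderiv'_mul (hf : DifferentiableAt ℝ f x) (hg : DifferentiableAt ℝ g x) (i : Fin d) :
    pderiv' d (fun y => f y * g y) i x = f x * pderiv' d g i x + g x * pderiv' d f i x := by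
  simp [pderiv', fderiv_fun_mul hf hg]

theorem ContDiffAt.pderiv'_pderiv'_eq_fderiv_fderiv (hf : ContDiffAt ℝ 2 f x) (i j : Fin d) :
    pderiv' d (pderiv' d f i) j x =
      fderiv ℝ (fderiv ℝ f) x (EuclideanSpace.single j 1) (EuclideanSpace.single i 1) := by
  have h : DifferentiableAt ℝ (fderiv ℝ f) x :=
    (hf.fderiv_right (m := 1) (by norm_num)).differentiableAt one_ne_zero
  change fderiv ℝ (fun y => fderiv ℝ f y (EuclideanSpace.single i 1)) x _ = _
  simp [fderiv_clm_apply h (differentiableAt_const _)]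

theorem ContDiffAt.differentiableAt_pderiv' (hf : ContDiffAt ℝ 2 f x) (i : Fin d) :
    DifferentiableAt ℝ (pderiv' d f i) x :=
  ((hf.fderiv_right (m := 1) (by norm_num)).differentiableAt one_ne_zero).clm_apply
    (differentiableAt_const _)

theorem ContDiffAt.pderiv'_pderiv'_comm (hf : ContDiffAt ℝ 2 f x) (i j : Fin d) :
    pderiv' d (pderiv' d f i) j x = pderiv' d (pderiv' d f j) i x := by
  rw [hf.pderiv'_pderiv'_eq_fderiv_fderiv, hf.pderiv'_pderiv'_eq_fderiv_fderiv]
  exact hf.isSymmSndFDerivAt (by simp) _ _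

theorem ContDiffAt.pderiv'_smul_gradient_apply (hf : ContDiffAt ℝ 2 f x)
    (hg : DifferentiableAt ℝ g x) (i j : Fin d) :
    pderiv' d (fun y => (g y • gradient f y) i) j x =
      g x * pderiv' d (pderiv' d f i) j x + pderiv' d f i x * pderiv' d g j x := by
  simp only [PiLp.smul_apply, smul_eq_mul, gradient_apply_eq_pderiv']
  exact pderiv'_mul hg (hf.differentiableAt_pderiv' i) j

end PartialDerivatives

theorem stmt3_general
    (d : ℕ)
    (u φ : EuclideanSpace ℝ (Fin d) → ℝ) (x : EuclideanSpace ℝ (Fin d))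
    (hu : ContDiffAt ℝ 2 u x) (hφ : ContDiffAt ℝ 1 φ x)
    (hharm : ∑ i, pderiv' d (pderiv' d u i) i x = 0)
    (v : EuclideanSpace ℝ (Fin d) → EuclideanSpace ℝ (Fin d))
    (hv : v = fun y => φ y • gradient u y) :
    (∑ i, pderiv' d (fun y => v y i) i x) ^ 2
      - ∑ i, ∑ j, pderiv' d (fun y => v y i) j x * pderiv' d (fun y => v y j) i x
      ≤ ‖gradient u x‖ ^ 2 * ‖gradient φ x‖ ^ 2 := by
  subst hv
  have hjac := hu.pderiv'_smul_gradient_apply (hφ.differentiableAt one_ne_zero)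
  simp only [hjac, norm_gradient_sq_eq_sum_pderiv'_sq]
  rw [sq_sum_diag_sub_sum_mul_swap_of_symm_of_trace_eq_zero
    (A := fun i j => pderiv' d (pderiv' d u i) j x) (fun i j => hu.pderiv'_pderiv'_comm i j) hharm]
  have hfrob : 0 ≤ ∑ i, ∑ j, (φ x * pderiv' d (pderiv' d u i) j x
      + pderiv' d u i x * pderiv' d φ j x) ^ 2 :=
    sum_nonneg fun i _ => sum_nonneg fun j _ => sq_nonneg _
  linarith

theorem stmt3
    (d : ℕ) (hd : 2 ≤ d)
    (u φ : EuclideanSpace ℝ (Fin d) → ℝ) (x : EuclideanSpace ℝ (Fin d))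
    (hu : ContDiffAt ℝ 2 u x) (hφ : ContDiffAt ℝ 1 φ x)
    (hharm : ∑ i, pderiv' d (pderiv' d u i) i x = 0)
    (v : EuclideanSpace ℝ (Fin d) → EuclideanSpace ℝ (Fin d))
    (hv : v = fun y => φ y • gradient u y) :
    (∑ i, pderiv' d (fun y => v y i) i x) ^ 2
      - ∑ i, ∑ j, pderiv' d (fun y => v y i) j x * pderiv' d (fun y => v y j) i x
      ≤ ‖gradient u x‖ ^ 2 * ‖gradient φ x‖ ^ 2 :=
  stmt3_general d u φ x hu hφ hharm v hv
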